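/- For the n-ary star product on ℝⁿ, when the p-th coordinate function x_p is placed in the m-th slot among smooth functions f₁,…,f_{m−1}, g_{m+1},…,g_n, the product truncates at first order: ⋆{f₁,…,f_{m−1}, x_p, g_{m+1},…,g_n} = x_p ∏_{i=1}^{m−1} f_i ∏_{j=m+1}^{n} g_j + (iθ_{p−m+1}/2) ∏_{i=1}^{m−1} ∂_{σ^{i−1}(i)} f_i ∏_{i=m+1}^{n} ∂_{σ^{i−1}(i)} g_i − (iθ_{p+m−n−1}/2) ∏_{i=1}^{m−1} ∂_{σ^{n−i+1}(i)} f_i ∏_{i=m+1}^{n} ∂_{σ^{n−i+1}(i)} g_i, where the indices of θ are taken modulo n. -/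

import Mathlib

noncomputable section

/-- Partial derivative ∂_k of a function on ℝⁿ. -/
def pdN {n : ℕ} (k : Fin n) (f : (Fin n → ℝ) → ℂ) : (Fin n → ℝ) → ℂ :=
  fun x => deriv (fun t : ℝ => f (Function.update x k t)) (x k)

/-- Iterated partial derivatives along a list of indices. -/
def pdLN {n : ℕ} (l : List (Fin n)) (f : (Fin n → ℝ) → ℂ) : (Fin n → ℝ) → ℂ :=
  l.foldr pdN f

/-- The n-ary star product ⋆{f₁,…,f_n} = m[exp(𝒫)(f₁ ⊗ ⋯ ⊗ f_n)], where
𝒫 = ∑_k (iθ_k/2)(∂_k ⊗ ∂_{σ(k)} ⊗ ⋯ ⊗ ∂_{σ^{n−1}(k)} − ∂_k ⊗ ∂_{σ^{n−1}(k)} ⊗ ⋯ ⊗ ∂_{σ(k)}),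
σ the cyclic permutation σ(k) = k+1 (mod n), so that in the positive term the j-th
slot (0-indexed) carries ∂_{k+j} and in the negative term ∂_{k−j}.  The exponential
is expanded as a series: the m-th order term is a sum over words `w : Fin m → Fin n × Bool`
in the 2n summands of 𝒫 (the Boolean recording the sign), divided by m!. -/
def starN (n : ℕ) [NeZero n] (θ : Fin n → ℝ) (F : Fin n → (Fin n → ℝ) → ℂ) :
    (Fin n → ℝ) → ℂ :=
  fun x => ∑' m : ℕ, (1 / m.factorial : ℂ) *
    ∑ w : Fin m → Fin n × Bool,
      (∏ i, (if (w i).2 then 1 else -1) * (Complex.I * (θ (w i).1) / 2)) *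
      ∏ j : Fin n,
        pdLN (List.ofFn fun i => if (w i).2 then (w i).1 + j else (w i).1 - j) (F j) x

lemma pdN_const {n : ℕ} (q : Fin n) (c : ℂ) : pdN q (fun _ => c) = fun _ => 0 := by
  funext x; simp [pdN]

lemma pdN_coord {n : ℕ} (p q : Fin n) :
    pdN q (fun x => (x p : ℂ)) = fun _ => if q = p then 1 else 0 := by
  funext x
  simp only [pdN]
  rcases eq_or_ne q p with h | h
  · subst h
    simp only [Function.update_self, if_pos rfl]
    have : deriv (fun t : ℝ => (t : ℂ)) (x q) = Complex.ofRealCLM 1 :=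
      Complex.ofRealCLM.deriv
    simpa using this
  · have h1 : (fun t : ℝ => ((Function.update x q t p : ℝ) : ℂ)) = fun _ => (x p : ℂ) := by
      funext t; rw [Function.update_of_ne (Ne.symm h)]
    rw [h1, deriv_const, if_neg h]

lemma pdLN_coord_const {n : ℕ} (p : Fin n) (l : List (Fin n)) (hl : l ≠ []) :
    ∃ c : ℂ, pdLN l (fun x => (x p : ℂ)) = fun _ => c := by
  induction l with
  | nil => exact absurd rfl hl
  | cons a l ih =>
    rcases eq_or_ne l [] with h | h
    · subst h
      exact ⟨if a = p then 1 else 0, pdN_coord p a⟩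
    · obtain ⟨c, hc⟩ := ih h
      refine ⟨0, ?_⟩
      show pdN a (pdLN l fun x => (x p : ℂ)) = fun _ => 0
      rw [hc, pdN_const]

lemma pdLN_coord_zero {n : ℕ} (p : Fin n) (l : List (Fin n)) (hl : 2 ≤ l.length) :
    pdLN l (fun x => (x p : ℂ)) = fun _ => 0 := by
  match l with
  | a :: b :: l =>
    obtain ⟨c, hc⟩ := pdLN_coord_const p (b :: l) (by simp)
    show pdN a (pdLN (b :: l) fun x => (x p : ℂ)) = fun _ => 0
    rw [hc, pdN_const]

theorem starN_coord_slot (n : ℕ) [NeZero n] (θ : Fin n → ℝ) (m p : Fin n)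
    (F : Fin n → (Fin n → ℝ) → ℂ)
    (hFm : F m = fun x => (x p : ℂ))
    (hF : ∀ j, j ≠ m → ContDiff ℝ (⊤ : ℕ∞) (F j)) :
    ∀ x, starN n θ F x =
      (x p : ℂ) * ∏ j ∈ Finset.univ.erase m, F j x
        + Complex.I * (θ (p - m)) / 2 * ∏ j ∈ Finset.univ.erase m, pdN (p - m + j) (F j) x
        - Complex.I * (θ (p + m)) / 2 * ∏ j ∈ Finset.univ.erase m, pdN (p + m - j) (F j) x := by
  intro x
  rw [starN]
  rw [tsum_eq_sum (s := ({0, 1} : Finset ℕ)) (f := fun k => (1 / k.factorial : ℂ) *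
    ∑ w : Fin k → Fin n × Bool,
      (∏ i, (if (w i).2 then 1 else -1) * (Complex.I * (θ (w i).1) / 2)) *
      ∏ j : Fin n,
        pdLN (List.ofFn fun i => if (w i).2 then (w i).1 + j else (w i).1 - j) (F j) x)]
  · rw [Finset.sum_pair (by norm_num : (0:ℕ) ≠ 1)]
    have h0 : (1 / (Nat.factorial 0) : ℂ) *
        ∑ w : Fin 0 → Fin n × Bool,
          (∏ i, (if (w i).2 then 1 else -1) * (Complex.I * (θ (w i).1) / 2)) *
          ∏ j : Fin n,
            pdLN (List.ofFn fun i => if (w i).2 then (w i).1 + j else (w i).1 - j) (F j) x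
        = (x p : ℂ) * ∏ j ∈ Finset.univ.erase m, F j x := by
      rw [Fintype.sum_unique]
      simp only [Nat.factorial_zero, Nat.cast_one, List.ofFn_zero, Finset.univ_eq_empty,
        Finset.prod_empty, one_mul, ne_eq, one_div, inv_one]
      have : ∀ j, pdLN (n := n) [] (F j) x = F j x := fun j => rfl
      simp only [this]
      rw [← Finset.mul_prod_erase Finset.univ (fun j => F j x) (Finset.mem_univ m), hFm]
    have hpm : p - m + m = p := by exact sub_add_cancel p m
    have hppm : p + m - m = p := by exact add_sub_cancel_right p m
    have pdLN_single : ∀ (a : Fin n) (f : (Fin n → ℝ) → ℂ), pdLN [a] f = pdN a f :=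
      fun a f => rfl
    have h1 : (1 / (Nat.factorial 1 : ℕ) : ℂ) *
        ∑ w : Fin 1 → Fin n × Bool,
          (∏ i, (if (w i).2 then 1 else -1) * (Complex.I * (θ (w i).1) / 2)) *
          ∏ j : Fin n,
            pdLN (List.ofFn fun i => if (w i).2 then (w i).1 + j else (w i).1 - j) (F j) x
        = Complex.I * (θ (p - m)) / 2 * ∏ j ∈ Finset.univ.erase m, pdN (p - m + j) (F j) x
          - Complex.I * (θ (p + m)) / 2 * ∏ j ∈ Finset.univ.erase m, pdN (p + m - j) (F j) x := by
      have hsum : ∀ (f : (Fin 1 → Fin n × Bool) → ℂ),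
          ∑ w, f w = ∑ a : Fin n × Bool, f (fun _ => a) := by
        intro f
        apply Fintype.sum_equiv (Equiv.funUnique (Fin 1) (Fin n × Bool))
        intro w
        congr 1
        funext i
        rw [Subsingleton.elim i default]
        rfl
      rw [hsum]
      simp only [Nat.factorial_one, Nat.cast_one, one_div, inv_one, one_mul, Fin.prod_univ_one]
      rw [Fintype.sum_prod_type]
      simp only [Fintype.sum_bool, if_true, Bool.false_eq_true, if_false]
      rw [Finset.sum_add_distrib]
      have e1 : ∀ (k j : Fin n),
          pdLN (List.ofFn fun _ : Fin 1 => k + j) (F j) x = pdN (k + j) (F j) x := by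
        intro k j
        simp only [List.ofFn_succ, List.ofFn_zero, pdLN_single]
      have e2 : ∀ (k j : Fin n),
          pdLN (List.ofFn fun _ : Fin 1 => k - j) (F j) x = pdN (k - j) (F j) x := by
        intro k j
        simp only [List.ofFn_succ, List.ofFn_zero, pdLN_single]
      have hplus : (∑ k : Fin n, (1 : ℂ) * (Complex.I * (θ k) / 2) *
            ∏ j : Fin n, pdLN (List.ofFn fun _ : Fin 1 => k + j) (F j) x)
          = Complex.I * (θ (p - m)) / 2 * ∏ j ∈ Finset.univ.erase m, pdN (p - m + j) (F j) x := by
        rw [Finset.sum_eq_single (p - m)]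
        · simp only [e1]
          rw [← Finset.mul_prod_erase Finset.univ
              (fun j => pdN (p - m + j) (F j) x) (Finset.mem_univ m)]
          simp only [hpm, hFm, pdN_coord, if_pos rfl, if_true]
          ring
        · intro k _ hk
          simp only [e1]
          rw [mul_eq_zero]; right
          apply Finset.prod_eq_zero (Finset.mem_univ m)
          rw [hFm]
          simp only [pdN_coord]
          rw [if_neg]
          intro h
          exact hk (by rw [← h]; exact (add_sub_cancel_right k m).symm)
        · intro h; exact absurd (Finset.mem_univ _) h
      have hminus : (∑ k : Fin n, (-1 : ℂ) * (Complex.I * (θ k) / 2) *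
            ∏ j : Fin n, pdLN (List.ofFn fun _ : Fin 1 => k - j) (F j) x)
          = -(Complex.I * (θ (p + m)) / 2
              * ∏ j ∈ Finset.univ.erase m, pdN (p + m - j) (F j) x) := by
        rw [Finset.sum_eq_single (p + m)]
        · simp only [e2]
          rw [← Finset.mul_prod_erase Finset.univ
              (fun j => pdN (p + m - j) (F j) x) (Finset.mem_univ m)]
          simp only [hppm, hFm, pdN_coord, if_pos rfl, if_true]
          ring
        · intro k _ hk
          simp only [e2]
          rw [mul_eq_zero]; right
          apply Finset.prod_eq_zero (Finset.mem_univ m)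
          rw [hFm]
          simp only [pdN_coord]
          rw [if_neg]
          intro h
          exact hk (by rw [← h]; exact (sub_add_cancel k m).symm)
        · intro h; exact absurd (Finset.mem_univ _) h
      rw [hplus, hminus]
      ring
    rw [h0, h1]
    ring

  · intro k hk
    have hk2 : 2 ≤ k := by
      simp only [Finset.mem_insert, Finset.mem_singleton] at hk
      omega
    rw [mul_eq_zero]; right
    apply Finset.sum_eq_zero
    intro w _
    rw [mul_eq_zero]; right
    apply Finset.prod_eq_zero (Finset.mem_univ m)
    rw [hFm, pdLN_coord_zero p _ (by simpa using hk2)]
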